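/- Let R, M > 0 and let Ω : ℝ² × [−R,R] → ℝ be continuous, continuously differentiable in its second argument, and satisfy b(y_⊥)² (|Ω(y_⊥,ρ)| + |∂_ρΩ(y_⊥,ρ)|) ≤ M for all y_⊥ ∈ ℝ² and |ρ| ≤ R. Let ψ : ℝ → [−R,R] be continuously differentiable with bounded derivative. Define the three-dimensional velocity field Ũ(x) = (1/(4π)) ∫_{ℝ³} |x−y|^{−3} (y₂−x₂, x₁−y₁) Ω(y_⊥, ψ(y₃)) dy and, for each x₃, the two-dimensional velocity field U(x_⊥, x₃) = (1/(2π)) ∫_{ℝ²} |x_⊥−y_⊥|^{−2} (y₂−x₂, x₁−y₁) Ω(y_⊥, ψ(x₃)) dy_⊥. Then there exists a constant C > 0, independent of Ω, ψ, R, M, such that sup_{x∈ℝ³} |Ũ(x) − U(x_⊥,x₃)| ≤ C M sup_{z∈ℝ} |ψ'(z)|, and moreover sup_{x∈ℝ³} |Ũ(x)| ≤ C M. -/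

import Mathlib

open Real MeasureTheory
open scoped ENNReal

noncomputable section

/-- Points of `ℝ³`, written as (horizontal part, vertical coordinate). -/
abbrev P3 := (ℝ × ℝ) × ℝ

/-- The weight `b(x₁,x₂) = (1+x₁²)^{1/2} (1+x₂²)^{1/2}` on `ℝ²`. -/
def bw (x : ℝ × ℝ) : ℝ := Real.sqrt (1 + x.1 ^ 2) * Real.sqrt (1 + x.2 ^ 2)

/-- `|x − y|³` on `ℝ³`. -/
def d3 (x y : P3) : ℝ :=
  ((x.1.1 - y.1.1) ^ 2 + (x.1.2 - y.1.2) ^ 2 + (x.2 - y.2) ^ 2) ^ ((3 : ℝ) / 2)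

/-- The horizontal components of the three-dimensional Biot–Savart velocity of the
vertical vorticity field `Ω(y_⊥, ψ(y₃)) e₃`. -/
def Ut (Ω : ℝ × ℝ → ℝ → ℝ) (ψ : ℝ → ℝ) (x : P3) : ℝ × ℝ :=
  (4 * π)⁻¹ •
    ∫ y : P3, (Ω y.1 (ψ y.2) / d3 x y) • ((y.1.2 - x.1.2, x.1.1 - y.1.1) : ℝ × ℝ)

/-- The two-dimensional Biot–Savart velocity of the horizontal slice at height `x₃`. -/
def Uslice (Ω : ℝ × ℝ → ℝ → ℝ) (ψ : ℝ → ℝ) (x : P3) : ℝ × ℝ :=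
  (2 * π)⁻¹ •
    ∫ yp : ℝ × ℝ,
      (Ω yp (ψ x.2) / ((x.1.1 - yp.1) ^ 2 + (x.1.2 - yp.2) ^ 2)) •
        ((yp.2 - x.1.2, x.1.1 - yp.1) : ℝ × ℝ)

/-!
Both velocities are integrals of the vorticity against the kernel
`k(x, y) = |x - y|⁻³ (y₂ - x₂, x₁ - y₁)`. Since `∫ (q + s²)^{-3/2} ds = 2 / q`, integrating `k` over
the vertical variable gives twice the planar kernel, so the sliced velocity is the
three-dimensional velocity of the vorticity frozen at height `x₃`. The difference `Ũ - U` is then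
the velocity of `Ω(y_⊥, ψ(y₃)) - Ω(y_⊥, ψ(x₃))`, which by the mean value theorem is at most
`M sup |ψ'| b(y_⊥)⁻² |x₃ - y₃|`.

Both estimates reduce, via `|k| ≤ |x - y|⁻²`, `|x₃ - y₃| |k| ≤ |x_⊥ - y_⊥| |x - y|⁻²` and
`∫ (q + s²)⁻¹ ds = π / √q`, to the finiteness of `∫ b⁻² |x_⊥ - y_⊥|⁻¹ dy_⊥` uniformly in `x_⊥`:
away from `x_⊥` this is `∫ b⁻² = π²`, and on the unit disc around `x_⊥` polar coordinates give `2π`.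
-/

open Set Filter
open scoped Topology

section Integral

variable {α E : Type*} [MeasurableSpace α] {μ : Measure α} [NormedAddCommGroup E]
  {g : α → E} {B : α → ℝ} {C : ℝ}

lemma integrable_of_norm_le_of_lintegral_le (hg : AEStronglyMeasurable g μ)
    (hgB : ∀ a, ‖g a‖ ≤ B a) (hB : ∫⁻ a, ENNReal.ofReal (B a) ∂μ ≤ ENNReal.ofReal C) :
    Integrable g μ := by
  refine ⟨hg, ?_⟩
  rw [hasFiniteIntegral_iff_norm]
  exact ((lintegral_mono fun a => ENNReal.ofReal_le_ofReal (hgB a)).trans hB).trans_lt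
    ENNReal.ofReal_lt_top

lemma norm_integral_le_of_norm_le_of_lintegral_le [NormedSpace ℝ E] (hC : 0 ≤ C)
    (hgB : ∀ a, ‖g a‖ ≤ B a) (hB : ∫⁻ a, ENNReal.ofReal (B a) ∂μ ≤ ENNReal.ofReal C) :
    ‖∫ a, g a ∂μ‖ ≤ C :=
  (norm_integral_le_lintegral_norm g).trans <| ENNReal.toReal_le_of_le_ofReal hC <|
    (lintegral_mono fun a => ENNReal.ofReal_le_ofReal (hgB a)).trans hB

end Integral

lemma self_div_pow_three {K : Type*} [DivisionRing K] (r : K) : r / r ^ 3 = (r ^ 2)⁻¹ := by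
  rcases eq_or_ne r 0 with rfl | h
  · simp
  · rw [pow_succ, div_mul_eq_div_div_swap, div_self h, one_div]

section OneDim

variable {q : ℝ}

lemma inv_add_sq_eq_inv_mul_inv_one_add_sq (hq : 0 < q) (s : ℝ) :
    (q + s ^ 2)⁻¹ = q⁻¹ * (1 + (s / √q) ^ 2)⁻¹ := by
  rw [div_pow, sq_sqrt hq.le, ← mul_inv]
  congr 1
  field_simp

lemma integrable_inv_add_sq (hq : 0 < q) : Integrable fun s : ℝ => (q + s ^ 2)⁻¹ := by
  simp_rw [inv_add_sq_eq_inv_mul_inv_one_add_sq hq]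
  exact (integrable_inv_one_add_sq.comp_div (sqrt_pos.2 hq).ne').const_mul _

lemma integral_inv_add_sq (hq : 0 < q) : ∫ s : ℝ, (q + s ^ 2)⁻¹ = π / √q := by
  have hs : 0 < √q := sqrt_pos.2 hq
  simp_rw [inv_add_sq_eq_inv_mul_inv_one_add_sq hq]
  rw [integral_const_mul, Measure.integral_comp_div (fun u : ℝ => (1 + u ^ 2)⁻¹),
    integral_univ_inv_one_add_sq, abs_of_pos hs, smul_eq_mul]
  have h2 : √q ^ 2 = q := sq_sqrt hq.le
  field_simp
  rw [h2]

lemma lintegral_inv_add_sub_sq (hq : 0 < q) (c : ℝ) :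
    ∫⁻ t : ℝ, ENNReal.ofReal ((q + (c - t) ^ 2)⁻¹) = ENNReal.ofReal (π / √q) := by
  rw [lintegral_sub_left_eq_self (fun s => ENNReal.ofReal ((q + s ^ 2)⁻¹)),
    ← ofReal_integral_eq_lintegral_ofReal (integrable_inv_add_sq hq)
      (Eventually.of_forall fun s => by positivity), integral_inv_add_sq hq]

lemma rpow_three_halves_eq_sqrt_pow_three {S : ℝ} (hS : 0 ≤ S) : S ^ (3 / 2 : ℝ) = √S ^ 3 := by
  rw [sqrt_eq_rpow, ← rpow_natCast, ← rpow_mul hS]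
  norm_num

lemma hasDerivAt_div_mul_sqrt_add_sq (hq : 0 < q) (s : ℝ) :
    HasDerivAt (fun s : ℝ => s / (q * √(q + s ^ 2))) ((q + s ^ 2) ^ (3 / 2 : ℝ))⁻¹ s := by
  have hS : 0 < q + s ^ 2 := by positivity
  have hsqrt : HasDerivAt (fun s : ℝ => √(q + s ^ 2)) (2 * s / (2 * √(q + s ^ 2))) s := by
    simpa using ((hasDerivAt_pow 2 s).const_add q).sqrt hS.ne'
  refine ((hasDerivAt_id s).div (hsqrt.const_mul q) (by positivity)).congr_deriv ?_
  rw [rpow_three_halves_eq_sqrt_pow_three hS.le]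
  have h2 : √(q + s ^ 2) ^ 2 = q + s ^ 2 := sq_sqrt hS.le
  have hne : √(q + s ^ 2) ≠ 0 := (sqrt_pos.2 hS).ne'
  simp only [id]
  field_simp
  linear_combination h2

lemma tendsto_div_mul_sqrt_add_sq (hq : 0 < q) :
    Tendsto (fun s : ℝ => s / (q * √(q + s ^ 2))) atTop (𝓝 q⁻¹) := by
  have hlim : Tendsto (fun s : ℝ => q⁻¹ * √(1 - q / (q + s ^ 2))) atTop (𝓝 q⁻¹) := by
    have h0 : Tendsto (fun s : ℝ => q / (q + s ^ 2)) atTop (𝓝 0) :=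
      tendsto_const_nhds.div_atTop
        (tendsto_atTop_add_const_left _ q (tendsto_pow_atTop two_ne_zero))
    simpa using ((h0.const_sub 1).sqrt).const_mul q⁻¹
  refine hlim.congr' ?_
  filter_upwards [eventually_ge_atTop 0] with s hs
  have hS : 0 < q + s ^ 2 := by positivity
  rw [show 1 - q / (q + s ^ 2) = s ^ 2 / (q + s ^ 2) by field_simp; ring,
    sqrt_div' _ hS.le, sqrt_sq hs]
  field_simp

lemma integral_inv_add_sq_rpow_three_halves (hq : 0 < q) :
    ∫ s : ℝ, ((q + s ^ 2) ^ (3 / 2 : ℝ))⁻¹ = 2 / q := by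
  have hdom : ∀ s : ℝ, ‖((q + s ^ 2) ^ (3 / 2 : ℝ))⁻¹‖ ≤ (√q)⁻¹ * (q + s ^ 2)⁻¹ := by
    intro s
    have hS : 0 < q + s ^ 2 := by positivity
    rw [norm_inv, norm_of_nonneg (by positivity), rpow_three_halves_eq_sqrt_pow_three hS.le,
      ← mul_inv, pow_succ, sq_sqrt hS.le, mul_comm]
    gcongr
    nlinarith
  have hint : Integrable fun s : ℝ => ((q + s ^ 2) ^ (3 / 2 : ℝ))⁻¹ :=
    ((integrable_inv_add_sq hq).const_mul _).mono'
      (by fun_prop : Measurable fun s : ℝ => ((q + s ^ 2) ^ (3 / 2 : ℝ))⁻¹).aestronglyMeasurable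
      (Eventually.of_forall hdom)
  have htop := tendsto_div_mul_sqrt_add_sq hq
  have hbot : Tendsto (fun s : ℝ => s / (q * √(q + s ^ 2))) atBot (𝓝 (-q⁻¹)) := by
    refine ((htop.comp tendsto_neg_atBot_atTop).neg).congr fun s => ?_
    simp [neg_div]
  rw [integral_of_hasDerivAt_of_tendsto (hasDerivAt_div_mul_sqrt_add_sq hq) hint hbot htop]
  ring

end OneDim

lemma bw_sq (y : ℝ × ℝ) : bw y ^ 2 = (1 + y.1 ^ 2) * (1 + y.2 ^ 2) := by
  rw [bw, mul_pow, sq_sqrt (by positivity), sq_sqrt (by positivity)]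

lemma one_le_bw_sq (y : ℝ × ℝ) : 1 ≤ bw y ^ 2 := by
  rw [bw_sq]
  nlinarith [sq_nonneg y.1, sq_nonneg y.2]

@[fun_prop]
lemma measurable_bw : Measurable bw := by
  unfold bw
  fun_prop

lemma lintegral_inv_one_add_sq : ∫⁻ t : ℝ, ENNReal.ofReal ((1 + t ^ 2)⁻¹) = ENNReal.ofReal π := by
  rw [← ofReal_integral_eq_lintegral_ofReal integrable_inv_one_add_sq
    (Eventually.of_forall fun t => by positivity), integral_univ_inv_one_add_sq]

lemma lintegral_inv_bw_sq :
    ∫⁻ w : ℝ × ℝ, ENNReal.ofReal ((bw w ^ 2)⁻¹) = ENNReal.ofReal (π ^ 2) := by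
  have hsplit : ∀ w : ℝ × ℝ, ENNReal.ofReal ((bw w ^ 2)⁻¹)
      = ENNReal.ofReal ((1 + w.1 ^ 2)⁻¹) * ENNReal.ofReal ((1 + w.2 ^ 2)⁻¹) := fun w => by
    rw [bw_sq, mul_inv, ENNReal.ofReal_mul (by positivity)]
  have hprod := lintegral_prod_mul (μ := volume) (ν := volume)
    (f := fun t : ℝ => ENNReal.ofReal ((1 + t ^ 2)⁻¹))
    (g := fun t : ℝ => ENNReal.ofReal ((1 + t ^ 2)⁻¹)) (by fun_prop) (by fun_prop)
  simp_rw [hsplit]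
  rw [Measure.volume_eq_prod, hprod, lintegral_inv_one_add_sq, ← ENNReal.ofReal_mul pi_pos.le,
    sq]

def sqDist (p w : ℝ × ℝ) : ℝ := (p.1 - w.1) ^ 2 + (p.2 - w.2) ^ 2

lemma sqDist_nonneg (p w : ℝ × ℝ) : 0 ≤ sqDist p w := by
  unfold sqDist
  positivity

lemma sqDist_eq_zero_iff {p w : ℝ × ℝ} : sqDist p w = 0 ↔ p = w := by
  rw [sqDist, add_eq_zero_iff_of_nonneg (sq_nonneg _) (sq_nonneg _), sq_eq_zero_iff, sq_eq_zero_iff,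
    sub_eq_zero, sub_eq_zero, Prod.ext_iff]

lemma sqDist_pos {p w : ℝ × ℝ} (h : w ≠ p) : 0 < sqDist p w :=
  (sqDist_nonneg p w).lt_of_ne (fun h' => h (sqDist_eq_zero_iff.1 h'.symm).symm)

lemma lintegral_indicator_inv_sqrt_sqDist_zero :
    ∫⁻ w : ℝ × ℝ, {w | sqDist 0 w ≤ 1}.indicator (fun w => ENNReal.ofReal (√(sqDist 0 w))⁻¹) w
      = ENNReal.ofReal (2 * π) := by
  rw [← lintegral_comp_polarCoord_symm]
  have hpolar : ∀ r ∈ polarCoord.target, ENNReal.ofReal r.1 •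
      {w | sqDist 0 w ≤ 1}.indicator (fun w => ENNReal.ofReal (√(sqDist 0 w))⁻¹)
        (polarCoord.symm r) = {r : ℝ × ℝ | r.1 ≤ 1}.indicator 1 r := by
    rintro ⟨r, θ⟩ ⟨hr, -⟩
    have hsq : sqDist 0 (polarCoord.symm (r, θ)) = r ^ 2 := by
      simp only [sqDist, polarCoord_symm_apply, Prod.fst_zero, Prod.snd_zero]
      linear_combination r ^ 2 * sin_sq_add_cos_sq θ
    simp only [Set.indicator, Set.mem_ofPred_eq, hsq, sqrt_sq hr.out.le,
      sq_le_one_iff₀ hr.out.le, Pi.one_apply, smul_eq_mul]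
    split_ifs
    · rw [← ENNReal.ofReal_mul hr.out.le, mul_inv_cancel₀ hr.out.ne', ENNReal.ofReal_one]
    · rw [mul_zero]
  have hset : {r : ℝ × ℝ | r.1 ≤ 1} ∩ Ioi (0 : ℝ) ×ˢ Ioo (-π) π = Ioc 0 1 ×ˢ Ioo (-π) π := by
    ext ⟨r, θ⟩
    simp [and_comm, and_assoc]
  rw [setLIntegral_congr_fun polarCoord.open_target.measurableSet hpolar,
    lintegral_indicator_one (measurableSet_le measurable_fst measurable_const),
    Measure.restrict_apply (measurableSet_le measurable_fst measurable_const),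
    polarCoord_target, Measure.volume_eq_prod, hset, Measure.prod_prod, Real.volume_Ioc,
    Real.volume_Ioo, ← ENNReal.ofReal_mul (by norm_num)]
  congr 1
  ring

lemma lintegral_indicator_inv_sqrt_sqDist (p : ℝ × ℝ) :
    ∫⁻ w : ℝ × ℝ, {w | sqDist p w ≤ 1}.indicator (fun w => ENNReal.ofReal (√(sqDist p w))⁻¹) w
      = ENNReal.ofReal (2 * π) := by
  rw [← lintegral_indicator_inv_sqrt_sqDist_zero, ← lintegral_add_right_eq_self (μ := volume)
    (f := {w | sqDist 0 w ≤ 1}.indicator fun w => ENNReal.ofReal (√(sqDist 0 w))⁻¹) (-p)]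
  congr 1 with w
  have htrans : sqDist 0 (w + -p) = sqDist p w := by
    simp only [sqDist, Prod.fst_add, Prod.snd_add, Prod.fst_neg, Prod.snd_neg, Prod.fst_zero,
      Prod.snd_zero]
    ring
  simp only [Set.indicator, Set.mem_ofPred_eq, htrans]

lemma lintegral_inv_bw_sq_mul_inv_sqrt_sqDist_le (p : ℝ × ℝ) :
    ∫⁻ w : ℝ × ℝ, ENNReal.ofReal ((bw w ^ 2)⁻¹ * (√(sqDist p w))⁻¹)
      ≤ ENNReal.ofReal (π ^ 2 + 2 * π) := by
  have hsplit : ∀ w, ENNReal.ofReal ((bw w ^ 2)⁻¹ * (√(sqDist p w))⁻¹)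
      ≤ ENNReal.ofReal ((bw w ^ 2)⁻¹)
        + {w | sqDist p w ≤ 1}.indicator (fun w => ENNReal.ofReal (√(sqDist p w))⁻¹) w := by
    intro w
    have hW : (bw w ^ 2)⁻¹ ≤ 1 := inv_le_one_of_one_le₀ (one_le_bw_sq w)
    by_cases hnear : sqDist p w ≤ 1
    · rw [Set.indicator_of_mem (show w ∈ {w | sqDist p w ≤ 1} from hnear)]
      refine le_add_left (ENNReal.ofReal_le_ofReal ?_)
      exact mul_le_of_le_one_left (by positivity) hW
    · rw [Set.indicator_of_notMem (show w ∉ {w | sqDist p w ≤ 1} from hnear), add_zero]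
      refine ENNReal.ofReal_le_ofReal (mul_le_of_le_one_right (by positivity) ?_)
      exact inv_le_one_of_one_le₀ (one_le_sqrt.2 (not_le.1 hnear).le)
  calc _ ≤ ∫⁻ w : ℝ × ℝ, (ENNReal.ofReal ((bw w ^ 2)⁻¹)
          + {w | sqDist p w ≤ 1}.indicator (fun w => ENNReal.ofReal (√(sqDist p w))⁻¹) w) :=
        lintegral_mono hsplit
    _ = ENNReal.ofReal (π ^ 2 + 2 * π) := by
        rw [lintegral_add_left (f := fun w => ENNReal.ofReal ((bw w ^ 2)⁻¹))
          (by fun_prop), lintegral_inv_bw_sq,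
          lintegral_indicator_inv_sqrt_sqDist, ← ENNReal.ofReal_add (by positivity) (by positivity)]

def perpDiff (p w : ℝ × ℝ) : ℝ × ℝ := (w.2 - p.2, p.1 - w.1)

lemma norm_perpDiff_le (p w : ℝ × ℝ) : ‖perpDiff p w‖ ≤ √(sqDist p w) := by
  refine max_le ?_ ?_ <;> refine abs_le_sqrt ?_ <;> simp only [sqDist, perpDiff] <;> nlinarith

def biotSavartKernel (x y : P3) : ℝ × ℝ := (d3 x y)⁻¹ • perpDiff x.1 y.1

lemma d3_eq_sqrt_pow_three (x y : P3) : d3 x y = √(sqDist x.1 y.1 + (x.2 - y.2) ^ 2) ^ 3 :=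
  rpow_three_halves_eq_sqrt_pow_three (by positivity [sqDist_nonneg x.1 y.1])

lemma measurable_biotSavartKernel (x : P3) : Measurable (biotSavartKernel x) := by
  unfold biotSavartKernel perpDiff
  simp_rw [d3_eq_sqrt_pow_three, sqDist]
  fun_prop

lemma norm_biotSavartKernel_le (x y : P3) :
    ‖biotSavartKernel x y‖ ≤ √(sqDist x.1 y.1) / √(sqDist x.1 y.1 + (x.2 - y.2) ^ 2) ^ 3 := by
  rw [biotSavartKernel, norm_smul, d3_eq_sqrt_pow_three, norm_inv, norm_pow,
    norm_of_nonneg (sqrt_nonneg _), inv_mul_eq_div]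
  gcongr
  exact norm_perpDiff_le _ _

lemma norm_biotSavartKernel_le_inv (x y : P3) :
    ‖biotSavartKernel x y‖ ≤ (sqDist x.1 y.1 + (x.2 - y.2) ^ 2)⁻¹ := by
  set S := sqDist x.1 y.1 + (x.2 - y.2) ^ 2
  have hS : 0 ≤ S := by positivity [sqDist_nonneg x.1 y.1]
  calc ‖biotSavartKernel x y‖ ≤ √(sqDist x.1 y.1) / √S ^ 3 := norm_biotSavartKernel_le x y
    _ ≤ √S / √S ^ 3 := by gcongr; linarith [sq_nonneg (x.2 - y.2)]
    _ = S⁻¹ := by rw [self_div_pow_three, sq_sqrt hS]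

lemma abs_mul_norm_biotSavartKernel_le (x y : P3) :
    |x.2 - y.2| * ‖biotSavartKernel x y‖
      ≤ √(sqDist x.1 y.1) * (sqDist x.1 y.1 + (x.2 - y.2) ^ 2)⁻¹ := by
  set S := sqDist x.1 y.1 + (x.2 - y.2) ^ 2
  have hS : 0 ≤ S := by positivity [sqDist_nonneg x.1 y.1]
  calc |x.2 - y.2| * ‖biotSavartKernel x y‖ ≤ √S * (√(sqDist x.1 y.1) / √S ^ 3) := by
        gcongr
        · exact abs_le_sqrt (by linarith [sqDist_nonneg x.1 y.1])
        · exact norm_biotSavartKernel_le x y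
    _ = √(sqDist x.1 y.1) * S⁻¹ := by rw [mul_div_left_comm, self_div_pow_three, sq_sqrt hS]

lemma integral_biotSavartKernel_vertical (x : P3) (w : ℝ × ℝ) :
    ∫ t : ℝ, biotSavartKernel x (w, t) = (2 / sqDist x.1 w) • perpDiff x.1 w := by
  by_cases hq : sqDist x.1 w = 0
  · simp [biotSavartKernel, perpDiff, sqDist_eq_zero_iff.1 hq]
  have hq' : 0 < sqDist x.1 w := (sqDist_nonneg _ _).lt_of_ne (Ne.symm hq)
  simp only [biotSavartKernel]
  rw [integral_smul_const]
  have hd3 : ∀ t, d3 x (w, t) = (sqDist x.1 w + (x.2 - t) ^ 2) ^ (3 / 2 : ℝ) := fun _ => rfl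
  simp_rw [hd3]
  rw [integral_sub_left_eq_self (fun s => ((sqDist x.1 w + s ^ 2) ^ (3 / 2 : ℝ))⁻¹),
    integral_inv_add_sq_rpow_three_halves hq']

lemma lintegral_inv_bw_sq_mul_inv_dist_sq_le (x : P3) :
    ∫⁻ y : P3, ENNReal.ofReal ((bw y.1 ^ 2)⁻¹ * (sqDist x.1 y.1 + (x.2 - y.2) ^ 2)⁻¹)
      ≤ ENNReal.ofReal (π * (π ^ 2 + 2 * π)) := by
  have hinner : ∀ᵐ w : ℝ × ℝ,
      ∫⁻ t : ℝ, ENNReal.ofReal ((bw w ^ 2)⁻¹ * (sqDist x.1 w + (x.2 - t) ^ 2)⁻¹)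
        = ENNReal.ofReal π * ENNReal.ofReal ((bw w ^ 2)⁻¹ * (√(sqDist x.1 w))⁻¹) := by
    filter_upwards [Measure.ae_ne volume x.1] with w hw
    simp_rw [ENNReal.ofReal_mul (inv_nonneg.2 (sq_nonneg (bw w)))]
    rw [lintegral_const_mul' _ _ ENNReal.ofReal_ne_top, lintegral_inv_add_sub_sq (sqDist_pos hw),
      div_eq_mul_inv, ENNReal.ofReal_mul pi_pos.le]
    ring
  rw [Measure.volume_eq_prod, lintegral_prod _ (by unfold sqDist; fun_prop),
    lintegral_congr_ae hinner, lintegral_const_mul' _ _ ENNReal.ofReal_ne_top,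
    ENNReal.ofReal_mul pi_pos.le]
  gcongr
  exact lintegral_inv_bw_sq_mul_inv_sqrt_sqDist_le x.1

lemma lintegral_inv_bw_sq_mul_sqrt_sqDist_mul_inv_dist_sq (x : P3) :
    ∫⁻ y : P3, ENNReal.ofReal
        ((bw y.1 ^ 2)⁻¹ * (√(sqDist x.1 y.1) * (sqDist x.1 y.1 + (x.2 - y.2) ^ 2)⁻¹))
      = ENNReal.ofReal (π * π ^ 2) := by
  have hinner : ∀ᵐ w : ℝ × ℝ, ∫⁻ t : ℝ, ENNReal.ofReal
        ((bw w ^ 2)⁻¹ * (√(sqDist x.1 w) * (sqDist x.1 w + (x.2 - t) ^ 2)⁻¹))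
        = ENNReal.ofReal π * ENNReal.ofReal ((bw w ^ 2)⁻¹) := by
    filter_upwards [Measure.ae_ne volume x.1] with w hw
    have hq := sqDist_pos hw
    simp_rw [← mul_assoc, ENNReal.ofReal_mul (by positivity : 0 ≤ (bw w ^ 2)⁻¹ * √(sqDist x.1 w))]
    rw [lintegral_const_mul' _ _ ENNReal.ofReal_ne_top, lintegral_inv_add_sub_sq hq,
      ← ENNReal.ofReal_mul (by positivity), ← ENNReal.ofReal_mul pi_pos.le]
    congr 1
    field_simp [(sqrt_pos.2 hq).ne']
  rw [Measure.volume_eq_prod, lintegral_prod _ (by unfold sqDist; fun_prop),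
    lintegral_congr_ae hinner, lintegral_const_mul' _ _ ENNReal.ofReal_ne_top,
    lintegral_inv_bw_sq, ← ENNReal.ofReal_mul pi_pos.le]

lemma abs_le_of_bw_sq_mul_add_le {w : ℝ × ℝ} {a b M : ℝ} (h : bw w ^ 2 * (|a| + |b|) ≤ M) :
    |a| ≤ M * (bw w ^ 2)⁻¹ ∧ |b| ≤ M * (bw w ^ 2)⁻¹ := by
  have hw : 0 < bw w ^ 2 := one_pos.trans_le (one_le_bw_sq w)
  simp only [← div_eq_mul_inv, le_div_iff₀ hw]
  constructor <;> nlinarith [abs_nonneg a, abs_nonneg b]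

lemma abs_comp_sub_comp_le {f f' ψ : ℝ → ℝ} {s : Set ℝ} {C K : ℝ} (hs : Convex ℝ s)
    (hf : ∀ ρ ∈ s, HasDerivWithinAt f (f' ρ) s ρ) (hf' : ∀ ρ ∈ s, |f' ρ| ≤ C)
    (hψs : ∀ z, ψ z ∈ s) (hψ : Differentiable ℝ ψ) (hψ' : ∀ z, |deriv ψ z| ≤ K) (a b : ℝ) :
    |f (ψ a) - f (ψ b)| ≤ C * K * |a - b| := by
  have hC : 0 ≤ C := (abs_nonneg _).trans (hf' _ (hψs 0))
  have hfψ := hs.norm_image_sub_le_of_norm_hasDerivWithin_le hf hf' (hψs b) (hψs a)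
  have hψab := convex_univ.norm_image_sub_le_of_norm_deriv_le (fun z _ => hψ z)
    (fun z _ => hψ' z) (mem_univ b) (mem_univ a)
  simp only [norm_eq_abs] at hfψ hψab
  calc |f (ψ a) - f (ψ b)| ≤ C * |ψ a - ψ b| := hfψ
    _ ≤ C * (K * |a - b|) := by gcongr
    _ = C * K * |a - b| := by ring

section Velocity

def biotSavartVelocity (F : P3 → ℝ) (x : P3) : ℝ × ℝ :=
  (4 * π)⁻¹ • ∫ y, F y • biotSavartKernel x y

lemma Ut_eq_biotSavartVelocity (Ω : ℝ × ℝ → ℝ → ℝ) (ψ : ℝ → ℝ) :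
    Ut Ω ψ = biotSavartVelocity fun y => Ω y.1 (ψ y.2) := by
  ext1 x
  simp only [Ut, biotSavartVelocity, biotSavartKernel, smul_smul, div_eq_mul_inv]
  rfl

variable {x : P3} {F G : P3 → ℝ} {M : ℝ}

lemma norm_smul_biotSavartKernel_le (hb : ∀ y, |F y| ≤ M * (bw y.1 ^ 2)⁻¹) (y : P3) :
    ‖F y • biotSavartKernel x y‖
      ≤ M * ((bw y.1 ^ 2)⁻¹ * (sqDist x.1 y.1 + (x.2 - y.2) ^ 2)⁻¹) := by
  rw [norm_smul, norm_eq_abs, ← mul_assoc]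
  exact mul_le_mul (hb y) (norm_biotSavartKernel_le_inv x y) (norm_nonneg _)
    ((abs_nonneg _).trans (hb y))

lemma lintegral_const_mul_inv_bw_sq_mul_inv_dist_sq_le (hM : 0 ≤ M) :
    ∫⁻ y : P3, ENNReal.ofReal (M * ((bw y.1 ^ 2)⁻¹ * (sqDist x.1 y.1 + (x.2 - y.2) ^ 2)⁻¹))
      ≤ ENNReal.ofReal (M * (π * (π ^ 2 + 2 * π))) := by
  simp_rw [ENNReal.ofReal_mul hM]
  rw [lintegral_const_mul' _ _ ENNReal.ofReal_ne_top]
  gcongr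
  exact lintegral_inv_bw_sq_mul_inv_dist_sq_le x

lemma integrable_smul_biotSavartKernel (hF : AEStronglyMeasurable F) (hM : 0 ≤ M)
    (hb : ∀ y, |F y| ≤ M * (bw y.1 ^ 2)⁻¹) : Integrable fun y => F y • biotSavartKernel x y :=
  integrable_of_norm_le_of_lintegral_le
    (hF.smul (measurable_biotSavartKernel x).aestronglyMeasurable)
    (norm_smul_biotSavartKernel_le hb) (lintegral_const_mul_inv_bw_sq_mul_inv_dist_sq_le hM)

lemma norm_biotSavartVelocity_le (hM : 0 ≤ M) (hb : ∀ y, |F y| ≤ M * (bw y.1 ^ 2)⁻¹) :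
    ‖biotSavartVelocity F x‖ ≤ (π + 2) * π / 4 * M := by
  have hint : ‖∫ y, F y • biotSavartKernel x y‖ ≤ M * (π * (π ^ 2 + 2 * π)) :=
    norm_integral_le_of_norm_le_of_lintegral_le (by positivity)
      (norm_smul_biotSavartKernel_le hb) (lintegral_const_mul_inv_bw_sq_mul_inv_dist_sq_le hM)
  rw [biotSavartVelocity, norm_smul, norm_inv, norm_of_nonneg (by positivity)]
  calc (4 * π)⁻¹ * ‖∫ y, F y • biotSavartKernel x y‖
      ≤ (4 * π)⁻¹ * (M * (π * (π ^ 2 + 2 * π))) := by gcongr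
    _ = (π + 2) * π / 4 * M := by field_simp

lemma norm_biotSavartVelocity_le_of_abs_le_mul_abs_sub {L : ℝ} (hL : 0 ≤ L)
    (hb : ∀ y, |F y| ≤ L * (bw y.1 ^ 2)⁻¹ * |x.2 - y.2|) :
    ‖biotSavartVelocity F x‖ ≤ π ^ 2 / 4 * L := by
  have hpt : ∀ y, ‖F y • biotSavartKernel x y‖
      ≤ L * ((bw y.1 ^ 2)⁻¹ * (√(sqDist x.1 y.1) * (sqDist x.1 y.1 + (x.2 - y.2) ^ 2)⁻¹)) := by
    intro y
    rw [norm_smul, norm_eq_abs]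
    calc |F y| * ‖biotSavartKernel x y‖
        ≤ L * (bw y.1 ^ 2)⁻¹ * |x.2 - y.2| * ‖biotSavartKernel x y‖ := by gcongr; exact hb y
      _ = L * (bw y.1 ^ 2)⁻¹ * (|x.2 - y.2| * ‖biotSavartKernel x y‖) := by ring
      _ ≤ L * (bw y.1 ^ 2)⁻¹ * (√(sqDist x.1 y.1) * (sqDist x.1 y.1 + (x.2 - y.2) ^ 2)⁻¹) :=
          mul_le_mul_of_nonneg_left (abs_mul_norm_biotSavartKernel_le x y) (by positivity)
      _ = _ := by ring
  have hint : ‖∫ y, F y • biotSavartKernel x y‖ ≤ L * (π * π ^ 2) := by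
    refine norm_integral_le_of_norm_le_of_lintegral_le (by positivity) hpt ?_
    simp_rw [ENNReal.ofReal_mul hL]
    rw [lintegral_const_mul' _ _ ENNReal.ofReal_ne_top,
      lintegral_inv_bw_sq_mul_sqrt_sqDist_mul_inv_dist_sq]
  rw [biotSavartVelocity, norm_smul, norm_inv, norm_of_nonneg (by positivity)]
  calc (4 * π)⁻¹ * ‖∫ y, F y • biotSavartKernel x y‖
      ≤ (4 * π)⁻¹ * (L * (π * π ^ 2)) := by gcongr
    _ = π ^ 2 / 4 * L := by field_simp

lemma biotSavartVelocity_sub (hF : Integrable fun y => F y • biotSavartKernel x y)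
    (hG : Integrable fun y => G y • biotSavartKernel x y) :
    biotSavartVelocity F x - biotSavartVelocity G x
      = biotSavartVelocity (fun y => F y - G y) x := by
  simp only [biotSavartVelocity]
  rw [← smul_sub, ← integral_sub hF hG]
  simp_rw [sub_smul]

lemma biotSavartVelocity_comp_fst {F : ℝ × ℝ → ℝ} (hF : Measurable F) (hM : 0 ≤ M)
    (hb : ∀ w, |F w| ≤ M * (bw w ^ 2)⁻¹) :
    biotSavartVelocity (fun y => F y.1) x
      = (2 * π)⁻¹ • ∫ w, (F w / sqDist x.1 w) • perpDiff x.1 w := by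
  have hint : Integrable (fun y : P3 => F y.1 • biotSavartKernel x y) (volume.prod volume) :=
    integrable_smul_biotSavartKernel (hF.comp measurable_fst).aestronglyMeasurable hM
      fun y => hb y.1
  have hinner : ∀ w, ∫ t, F w • biotSavartKernel x (w, t)
      = (2 : ℝ) • ((F w / sqDist x.1 w) • perpDiff x.1 w) := fun w => by
    rw [integral_smul, integral_biotSavartKernel_vertical, smul_smul, smul_smul]
    congr 1
    ring
  rw [biotSavartVelocity, Measure.volume_eq_prod, integral_prod _ hint]
  simp_rw [hinner]
  rw [integral_smul, smul_smul]
  congr 1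
  field_simp
  ring

end Velocity

/-- The three-dimensional Biot–Savart velocity of a vertically modulated vortex
`Ω(x_⊥, ψ(x₃)) e₃` is uniformly close to the sliced two-dimensional velocity, with an
error controlled by `sup |ψ'|`, and is itself uniformly bounded. -/
theorem modulated_vortex_velocity_comparison :
    ∃ C > 0, ∀ (R M : ℝ), 0 < R → 0 < M →
      ∀ (Ω D : ℝ × ℝ → ℝ → ℝ) (ψ : ℝ → ℝ),
        Continuous (fun p : (ℝ × ℝ) × ℝ => Ω p.1 p.2) →
        (∀ y : ℝ × ℝ, ∀ ρ ∈ Set.Icc (-R) R,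
          HasDerivWithinAt (Ω y) (D y ρ) (Set.Icc (-R) R) ρ) →
        ContinuousOn (fun p : (ℝ × ℝ) × ℝ => D p.1 p.2)
          (Set.univ ×ˢ Set.Icc (-R) R) →
        (∀ y : ℝ × ℝ, ∀ ρ ∈ Set.Icc (-R) R,
          bw y ^ 2 * (|Ω y ρ| + |D y ρ|) ≤ M) →
        (∀ z : ℝ, ψ z ∈ Set.Icc (-R) R) →
        Differentiable ℝ ψ → Continuous (deriv ψ) →
        (∃ K : ℝ, ∀ z : ℝ, |deriv ψ z| ≤ K) →
        ∀ x : P3,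
          ‖Ut Ω ψ x - Uslice Ω ψ x‖ ≤ C * M * (⨆ z : ℝ, |deriv ψ z|) ∧
          ‖Ut Ω ψ x‖ ≤ C * M := by
  refine ⟨6, by norm_num, fun R M _ hM Ω D ψ hΩ hΩD _ hbound hψR hψ _ ⟨K₀, hK₀⟩ x => ?_⟩
  set K := ⨆ z, |deriv ψ z|
  have hK : ∀ z, |deriv ψ z| ≤ K := le_ciSup ⟨K₀, by rintro _ ⟨z, rfl⟩; exact hK₀ z⟩
  have hΩle : ∀ w, ∀ ρ ∈ Icc (-R) R, |Ω w ρ| ≤ M * (bw w ^ 2)⁻¹ :=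
    fun w ρ hρ => (abs_le_of_bw_sq_mul_add_le (hbound w ρ hρ)).1
  have hDle : ∀ w, ∀ ρ ∈ Icc (-R) R, |D w ρ| ≤ M * (bw w ^ 2)⁻¹ :=
    fun w ρ hρ => (abs_le_of_bw_sq_mul_add_le (hbound w ρ hρ)).2
  have hlip : ∀ y : P3,
      |Ω y.1 (ψ y.2) - Ω y.1 (ψ x.2)| ≤ M * K * (bw y.1 ^ 2)⁻¹ * |x.2 - y.2| := fun y =>
    (abs_comp_sub_comp_le (convex_Icc (-R) R) (hΩD y.1) (hDle y.1) hψR hψ hK y.2 x.2).trans_eq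
      (by rw [abs_sub_comm]; ring)
  have hF₁ : Continuous fun y : P3 => Ω y.1 (ψ y.2) :=
    hΩ.comp (continuous_fst.prodMk (hψ.continuous.comp continuous_snd))
  have hF₀ : Continuous fun w : ℝ × ℝ => Ω w (ψ x.2) :=
    hΩ.comp (continuous_id.prodMk continuous_const)
  have hb₁ : ∀ y : P3, |Ω y.1 (ψ y.2)| ≤ M * (bw y.1 ^ 2)⁻¹ := fun y => hΩle y.1 _ (hψR y.2)
  have hb₀ : ∀ w, |Ω w (ψ x.2)| ≤ M * (bw w ^ 2)⁻¹ := fun w => hΩle w _ (hψR x.2)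
  have hUs : Uslice Ω ψ x = biotSavartVelocity (fun y => Ω y.1 (ψ x.2)) x :=
    (biotSavartVelocity_comp_fst hF₀.measurable hM.le hb₀).symm
  rw [Ut_eq_biotSavartVelocity, hUs,
    biotSavartVelocity_sub (integrable_smul_biotSavartKernel hF₁.aestronglyMeasurable hM.le hb₁)
      (integrable_smul_biotSavartKernel (F := fun y : P3 => Ω y.1 (ψ x.2))
        (hF₀.comp continuous_fst).aestronglyMeasurable hM.le fun y => hb₀ y.1)]
  have hK0 : 0 ≤ K := (abs_nonneg _).trans (hK 0)
  refine ⟨(norm_biotSavartVelocity_le_of_abs_le_mul_abs_sub (by positivity) hlip).trans ?_,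
    (norm_biotSavartVelocity_le hM.le hb₁).trans ?_⟩
  · rw [mul_assoc 6]
    gcongr
    nlinarith [pi_le_four, pi_pos]
  · gcongr
    nlinarith [pi_le_four, pi_pos]
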